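/- Let f be a C² functional on a Hilbert space X and η its normalized steepest descent flow. Let x̄ be a strict local minimizer of f lying in a connected component (still denoted f^c) of a sublevel set, let ε > 0 and let F be the connected component of {x : f(x) < f(x̄) + ε} containing x̄, assumed contained in a ball B_r(x̄) which is contractible in f^c. For x₁ with ω_{x₁} = {x̄}, define T_{x₁} := inf{t ≥ 0 : η(t,x₁) ∈ F}, the descent path γ¹(λ) = η(T_{x₁}λ, x₁), the segment γ²(λ) = (1-λ)η(T_{x₁},x₁) + λx̄, and the descending path α_{x₁} = γ¹ ∘ γ² (juxtaposition). Then α_{x₁} is a continuous path in f^c from x₁ to x̄, and the maps x₁ ↦ T_{x₁} and x₁ ↦ α_{x₁} (into C([0,1],X) with the uniform topology) are continuous on X̄ := {x : ω_x = {x̄}}. -/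

import Mathlib

open Filter Topology Metric Set

variable {X : Type*} [NormedAddCommGroup X] [InnerProductSpace ℝ X] [CompleteSpace X]

/-- The normalized steepest descent flow of `f`:
`η(0,x) = x` and `dη/dt = -∇f(η)/(1+‖∇f(η)‖)`. -/
def IsNSDFlow (f : X → ℝ) (η : ℝ → X → X) : Prop :=
  (∀ x, η 0 x = x) ∧
  ∀ x t, HasDerivAt (fun s => η s x)
    (-((1 + ‖gradient f (η t x)‖)⁻¹ • gradient f (η t x))) t

/-- The ω-limit set of `x` for the flow `η`. -/
def omegaLim (η : ℝ → X → X) (x : X) : Set X :=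
  {y | ∃ t : ℕ → ℝ, Tendsto t atTop atTop ∧ Tendsto (fun n => η (t n) x) atTop (𝓝 y)}

/-- `x₀` is a strict local minimizer of `f`. -/
def StrictLocalMin (f : X → ℝ) (x₀ : X) : Prop :=
  ∃ r₀ > 0, ∀ r : ℝ, 0 < r → r < r₀ → ∃ ε > 0, ∀ y ∈ Metric.sphere x₀ r, f x₀ + ε ≤ f y

/-- The loop `γ : [0,1] → X` is contractible within the set `S`. -/
def LoopContractibleIn (S : Set X) (γ : ℝ → X) : Prop :=
  ∃ (h : ℝ → ℝ → X) (x₀ : X),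
    ContinuousOn (fun p : ℝ × ℝ => h p.1 p.2) (Icc 0 1 ×ˢ Icc 0 1) ∧
    (∀ l ∈ Icc (0:ℝ) 1, ∀ s ∈ Icc (0:ℝ) 1, h l s ∈ S) ∧
    (∀ s ∈ Icc (0:ℝ) 1, h 0 s = γ s) ∧
    (∀ s ∈ Icc (0:ℝ) 1, h 1 s = x₀) ∧
    ∀ l ∈ Icc (0:ℝ) 1, h l 0 = h l 1

/-- A subset `S` is simply connected: every loop in `S` is contractible in `S`. -/
def SimplyConnIn (S : Set X) : Prop :=
  ∀ γ : ℝ → X, ContinuousOn γ (Icc 0 1) → (∀ s ∈ Icc (0:ℝ) 1, γ s ∈ S) →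
    γ 0 = γ 1 → LoopContractibleIn S γ


/-!
The normalized field `-∇f / (1 + ‖∇f‖)` has norm at most `1` and is locally Lipschitz, so
trajectories are `1`-Lipschitz in time, unique, and depend continuously on the initial point,
uniformly on compact time intervals (Gronwall inside a tube around a trajectory).

Along a trajectory with `x̄ ∈ ω_x`, `f` decreases and the trajectory returns near `x̄` at
arbitrarily late times; since its arcs below a level are connected, it lies in `F` exactly when
`f < f x̄ + ε`, so `T_x` is the first time `f (η t x)` drops below `f x̄ + ε`. Before that time
`f` is strictly above this level: otherwise `f ∘ η` would be constant on an interval, the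
trajectory would sit at a critical point, never leave it, and that point would be `x̄`. Strict
crossings on both sides of `T_x` and continuous dependence give continuity of `T`, and then
uniform continuity of `α`. The path stays in `f^c` since `f` decreases along `η`, and its segment
part lies in `B_r(x̄)` since `η (T_x) x ∈ closure F`.
-/

theorem lipschitzWith_inv_one_add_norm_smul {E : Type*} [NormedAddCommGroup E]
    [NormedSpace ℝ E] : LipschitzWith 2 fun v : E => (1 + ‖v‖)⁻¹ • v := by
  refine LipschitzWith.of_dist_le_mul fun u v => ?_
  rw [dist_eq_norm, dist_eq_norm]
  set a := (1 + ‖u‖)⁻¹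
  set b := (1 + ‖v‖)⁻¹
  have ha : a ≤ 1 := inv_le_one_of_one_le₀ (by simp)
  have hb : b * ‖v‖ ≤ 1 := by
    rw [inv_mul_le_iff₀ (by positivity)]
    linarith
  have hab : a - b = (‖v‖ - ‖u‖) * a * b := by
    simp only [a, b]
    field_simp
    ring
  have hdiff : |‖v‖ - ‖u‖| ≤ ‖u - v‖ := by
    rw [abs_sub_comm]
    exact abs_norm_sub_norm_le u v
  calc ‖a • u - b • v‖ = ‖a • (u - v) + (a - b) • v‖ := by
        rw [smul_sub, sub_smul]
        abel_nf
    _ ≤ a * ‖u - v‖ + |‖v‖ - ‖u‖| * a * (b * ‖v‖) := by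
        refine (norm_add_le _ _).trans_eq ?_
        rw [norm_smul, norm_smul, hab, Real.norm_of_nonneg (by positivity), Real.norm_eq_abs,
          abs_mul, abs_mul, abs_of_pos (by positivity : 0 < a), abs_of_pos (by positivity : 0 < b)]
        ring
    _ ≤ 1 * ‖u - v‖ + ‖u - v‖ * 1 * 1 := by gcongr
    _ = 2 * ‖u - v‖ := by ring

theorem LocallyLipschitz.exists_forall_lipschitzOnWith_ball {α β : Type*} [PseudoMetricSpace α]
    [PseudoMetricSpace β] {V : α → β} (hV : LocallyLipschitz V) {C : Set α} (hC : IsCompact C) :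
    ∃ δ > 0, ∃ K, ∀ y ∈ C, LipschitzOnWith K V (ball y δ) := by
  choose K U hU hVU using hV
  obtain ⟨s, hs⟩ := hC.elim_finite_subcover (fun x => interior (U x)) (fun _ => isOpen_interior)
    fun x _ => mem_iUnion.2 ⟨x, mem_interior_iff_mem_nhds.2 (hU x)⟩
  obtain ⟨δ, hδ, hball⟩ := lebesgue_number_lemma_of_metric (c := fun i : s => interior (U i)) hC
    (fun _ => isOpen_interior) (by simpa only [iUnion_subtype, Finset.mem_coe] using hs)
  refine ⟨δ, hδ, s.sup K, fun y hy => ?_⟩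
  obtain ⟨i, hi⟩ := hball y hy
  exact ((hVU i).mono (hi.trans interior_subset)).weaken (Finset.le_sup i.2)

section ODE

variable {E : Type*} [NormedAddCommGroup E] [NormedSpace ℝ E] {V : E → E}

theorem LocallyLipschitz.exists_forall_dist_lt_of_hasDerivAt (hV : LocallyLipschitz V)
    {γ : ℝ → E} (hγ : ∀ t, HasDerivAt γ (V (γ t)) t) (a b : ℝ) {δ : ℝ} (hδ : 0 < δ) :
    ∃ ρ > 0, ∀ γ' : ℝ → E, (∀ t, HasDerivAt γ' (V (γ' t)) t) →
      dist (γ a) (γ' a) < ρ → ∀ t ∈ Icc a b, dist (γ t) (γ' t) < δ := by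
  have hγc : Continuous γ := continuous_iff_continuousAt.2 fun t => (hγ t).continuousAt
  obtain ⟨δ₀, hδ₀, K, hK⟩ := hV.exists_forall_lipschitzOnWith_ball (isCompact_Icc.image hγc)
  set m := min δ δ₀
  refine ⟨m * Real.exp (-(K * (b - a))), by positivity, fun γ' hγ' ha => ?_⟩
  have hγ'c : Continuous γ' := continuous_iff_continuousAt.2 fun t => (hγ' t).continuousAt
  suffices ∀ t ∈ Icc a b, dist (γ t) (γ' t) < m from
    fun t ht => (this t ht).trans_le (min_le_left _ _)
  by_contra! hexit
  -- `t₀` is the first time at which `γ'` leaves the `m`-tube around `γ`; before it, Gronwall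
  -- applies in the tube and keeps `γ'` well inside it up to time `t₀` itself.
  set B := Icc a b ∩ {t | m ≤ dist (γ t) (γ' t)}
  have hBc : IsClosed B := isClosed_Icc.inter (isClosed_le continuous_const (hγc.dist hγ'c))
  have hBne : B.Nonempty := let ⟨t, ht, h⟩ := hexit; ⟨t, ht, h⟩
  have hBbdd : BddBelow B := ⟨a, fun _ ht => ht.1.1⟩
  set t₀ := sInf B
  obtain ⟨⟨ht₀a, ht₀b⟩, ht₀⟩ := hBc.csInf_mem hBne hBbdd
  have hinside : ∀ t ∈ Ico a t₀, dist (γ t) (γ' t) < m := fun t ht =>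
    not_le.1 fun h => not_lt.2 (csInf_le hBbdd ⟨⟨ht.1, ht.2.le.trans ht₀b⟩, h⟩) ht.2
  have hgron := dist_le_of_trajectories_ODE_of_mem (v := fun _ => V) (K := K)
    (s := fun t => ball (γ t) δ₀)
    (fun t ht => hK _ (mem_image_of_mem _ ⟨ht.1, ht.2.le.trans ht₀b⟩))
    hγc.continuousOn (fun t _ => (hγ t).hasDerivWithinAt) (fun t _ => mem_ball_self hδ₀)
    hγ'c.continuousOn (fun t _ => (hγ' t).hasDerivWithinAt)
    (fun t ht => mem_ball_comm.1 ((hinside t ht).trans_le (min_le_right _ _))) le_rfl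
    t₀ ⟨ht₀a, le_rfl⟩
  have hsmall : dist (γ a) (γ' a) * Real.exp (K * (t₀ - a)) < m := calc
    _ < m * Real.exp (-(K * (b - a))) * Real.exp (K * (t₀ - a)) := by gcongr
    _ ≤ m * Real.exp (-(K * (b - a))) * Real.exp (K * (b - a)) := by gcongr
    _ = m := by rw [mul_assoc, ← Real.exp_add, neg_add_cancel, Real.exp_zero, mul_one]
  exact not_le.2 (hgron.trans_lt hsmall) ht₀

theorem LocallyLipschitz.eq_of_hasDerivAt (hV : LocallyLipschitz V) {γ γ' : ℝ → E}
    (hγ : ∀ t, HasDerivAt γ (V (γ t)) t) (hγ' : ∀ t, HasDerivAt γ' (V (γ' t)) t) {a : ℝ}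
    (ha : γ a = γ' a) {t : ℝ} (ht : a ≤ t) : γ t = γ' t := by
  refine eq_of_forall_dist_le fun ε hε => ?_
  obtain ⟨ρ, hρ, hdep⟩ := hV.exists_forall_dist_lt_of_hasDerivAt hγ a t hε
  exact (hdep γ' hγ' (by rwa [ha, dist_self]) t ⟨ht, le_rfl⟩).le

end ODE

section

variable {Y : Type*} [TopologicalSpace Y]

theorem continuousOn_sInf_setOf_lt {g : Y → ℝ → ℝ} {L : ℝ} {Z : Set Y}
    (hg : ∀ t, 0 ≤ t → Continuous fun y => g y t) (hanti : ∀ y ∈ Z, Antitone (g y))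
    (hne : ∀ y ∈ Z, ∃ t, 0 ≤ t ∧ g y t < L)
    (hgt : ∀ y ∈ Z, ∀ t, 0 ≤ t → t < sInf {t | 0 ≤ t ∧ g y t < L} → L < g y t) :
    ContinuousOn (fun y => sInf {t | 0 ≤ t ∧ g y t < L}) Z := by
  have hbdd : ∀ y, BddBelow {t | 0 ≤ t ∧ g y t < L} := fun y => ⟨0, fun _ ht => ht.1⟩
  intro y₁ hy₁
  refine tendsto_order.2 ⟨fun a ha => ?_, fun b hb => ?_⟩
  · rcases lt_or_ge a 0 with ha0 | ha0
    · exact Eventually.of_forall fun y => ha0.trans_le (Real.sInf_nonneg fun _ ht => ht.1)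
    obtain ⟨t, hat, ht⟩ := exists_between ha
    have hL : L < g y₁ t := hgt y₁ hy₁ t (ha0.trans hat.le) ht
    filter_upwards [self_mem_nhdsWithin,
      ((hg t (ha0.trans hat.le)).continuousWithinAt).eventually_const_lt hL] with y hy hLy
    obtain ⟨s, hs0, hsL⟩ := hne y hy
    refine hat.trans_le (le_csInf ⟨s, hs0, hsL⟩ fun s hs => not_lt.1 fun hst => ?_)
    exact lt_asymm (hLy.trans_le (hanti y hy hst.le)) hs.2
  · obtain ⟨t, htb, ht⟩ := exists_between hb
    obtain ⟨s, hs, hst⟩ := exists_lt_of_csInf_lt (let ⟨s, hs⟩ := hne y₁ hy₁; ⟨s, hs⟩) htb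
    have hL : g y₁ t < L := (hanti y₁ hy₁ hst.le).trans_lt hs.2
    have ht0 : 0 ≤ t := hs.1.trans hst.le
    filter_upwards [((hg t ht0).continuousWithinAt).eventually_lt_const hL] with y hy
    exact (csInf_le (hbdd y) ⟨ht0, hy⟩).trans_lt ht

theorem map_sInf_mem_closure {γ : ℝ → Y} (hγ : Continuous γ) {U : Set Y}
    (hne : {t | 0 ≤ t ∧ γ t ∈ U}.Nonempty) : γ (sInf {t | 0 ≤ t ∧ γ t ∈ U}) ∈ closure U :=
  map_mem_closure hγ (csInf_mem_closure hne ⟨0, fun _ ht => ht.1⟩) fun _ ht => ht.2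

theorem mem_connectedComponentIn_of_antitone_comp {f : Y → ℝ} {γ : ℝ → Y} (hγ : Continuous γ)
    (hfγ : Antitone (f ∘ γ)) {c a t : ℝ} (ha : f (γ a) < c) (hat : a ≤ t) :
    γ t ∈ connectedComponentIn {y | f y < c} (γ a) :=
  (isPreconnected_Icc.image γ hγ.continuousOn).subset_connectedComponentIn
    ⟨a, left_mem_Icc.2 hat, rfl⟩ (by rintro _ ⟨s, hs, rfl⟩; exact (hfγ hs.1).trans_lt ha)
    ⟨t, right_mem_Icc.2 hat, rfl⟩

end

section OmegaLimit

variable {E : Type*} [NormedAddCommGroup E] {η : ℝ → E → E} {x p : E}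

theorem exists_ge_mem_of_mem_omegaLim (hp : p ∈ omegaLim η x) {U : Set E} (hU : U ∈ 𝓝 p)
    (a : ℝ) : ∃ t ≥ a, η t x ∈ U :=
  let ⟨ts, hts, hconv⟩ := hp
  let ⟨n, hn⟩ := ((hts.eventually_ge_atTop a).and (hconv.eventually hU)).exists
  ⟨ts n, hn⟩

theorem eq_of_mem_omegaLim_of_forall_ge (hp : p ∈ omegaLim η x) {q : E} {u : ℝ}
    (h : ∀ t ≥ u, η t x = q) : q = p :=
  let ⟨_, hts, hconv⟩ := hp
  tendsto_nhds_unique (tendsto_const_nhds.congr' ((hts.eventually_ge_atTop u).mono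
    fun _ hn => (h _ hn).symm)) hconv

theorem mem_connectedComponentIn_of_mem_omegaLim [NormedSpace ℝ E] {f : E → ℝ}
    (hf : Continuous f) (hγ : Continuous fun t => η t x) (hfγ : Antitone fun t => f (η t x))
    (hp : p ∈ omegaLim η x) {L t : ℝ} (hpL : f p < L) (ht : f (η t x) < L) :
    η t x ∈ connectedComponentIn {y | f y < L} p := by
  obtain ⟨s, hts, hs⟩ := exists_ge_mem_of_mem_omegaLim hp
    ((isOpen_lt hf continuous_const).connectedComponentIn.mem_nhds (mem_connectedComponentIn hpL)) t
  have hst := mem_connectedComponentIn_of_antitone_comp (f := f) hγ hfγ ht hts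
  rw [connectedComponentIn_eq hs, ← connectedComponentIn_eq hst]
  exact mem_connectedComponentIn ht

end OmegaLimit

section DescendingPath

variable {E : Type*} [NormedAddCommGroup E] [NormedSpace ℝ E]

/-- The juxtaposition `γ¹ ∘ γ²` of `γ¹(λ) = γ (T λ)` with the segment `γ²` from `γ T` to `p`. -/
noncomputable def descendingPath (γ : ℝ → E) (T : ℝ) (p : E) (s : ℝ) : E :=
  if s ≤ 1 / 2 then γ (T * (2 * s)) else (1 - (2 * s - 1)) • γ T + (2 * s - 1) • p

variable {γ γ₁ γ₂ : ℝ → E} {T T₁ T₂ : ℝ} {p : E}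

theorem continuous_descendingPath (hγ : Continuous γ) : Continuous (descendingPath γ T p) :=
  Continuous.if_le (hγ.comp (by fun_prop)) (by fun_prop) continuous_id continuous_const
    fun s hs => by simp [hs]

theorem descendingPath_zero : descendingPath γ T p 0 = γ 0 := by
  simp [descendingPath]

theorem descendingPath_one : descendingPath γ T p 1 = p := by
  norm_num [descendingPath]

theorem descendingPath_mem {S : Set E} (h₁ : ∀ u ∈ Icc (0 : ℝ) 1, γ (T * u) ∈ S)
    (h₂ : ∀ l ∈ Ioc (0 : ℝ) 1, (1 - l) • γ T + l • p ∈ S) {s : ℝ} (hs : s ∈ Icc (0 : ℝ) 1) :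
    descendingPath γ T p s ∈ S := by
  unfold descendingPath
  split_ifs with hs'
  · exact h₁ _ ⟨by linarith [hs.1], by linarith⟩
  · exact h₂ _ ⟨by linarith, by linarith [hs.2]⟩

theorem dist_descendingPath_le {δ : ℝ}
    (h : ∀ u ∈ Icc (0 : ℝ) 1, dist (γ₁ (T₁ * u)) (γ₂ (T₂ * u)) ≤ δ) {s : ℝ}
    (hs : s ∈ Icc (0 : ℝ) 1) :
    dist (descendingPath γ₁ T₁ p s) (descendingPath γ₂ T₂ p s) ≤ δ := by
  unfold descendingPath
  split_ifs with hs'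
  · exact h _ ⟨by linarith [hs.1], by linarith⟩
  · rw [dist_add_right, dist_smul₀, Real.norm_of_nonneg (by linarith [hs.2])]
    have h1 := h 1 ⟨zero_le_one, le_rfl⟩
    rw [mul_one, mul_one] at h1
    exact (mul_le_of_le_one_left dist_nonneg (by linarith)).trans h1

end DescendingPath

noncomputable def nsdField (f : X → ℝ) (y : X) : X :=
  -((1 + ‖gradient f y‖)⁻¹ • gradient f y)

theorem locallyLipschitz_nsdField {f : X → ℝ} (hf : ContDiff ℝ 2 f) :
    LocallyLipschitz (nsdField f) := by
  have hgrad : LocallyLipschitz (gradient f) :=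
    (InnerProductSpace.toDual ℝ X).symm.lipschitz.locallyLipschitz.comp
      (hf.fderiv_right (m := 1) (by norm_num)).locallyLipschitz
  exact lipschitzWith_inv_one_add_norm_smul.neg.locallyLipschitz.comp hgrad

theorem norm_nsdField_le_one (f : X → ℝ) (y : X) : ‖nsdField f y‖ ≤ 1 := by
  rw [nsdField, norm_neg, norm_smul, Real.norm_of_nonneg (by positivity),
    inv_mul_le_iff₀ (by positivity)]
  linarith

namespace IsNSDFlow

variable {f : X → ℝ} {η : ℝ → X → X}

theorem hasDerivAt (hη : IsNSDFlow f η) (x : X) (t : ℝ) :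
    HasDerivAt (fun s => η s x) (nsdField f (η t x)) t :=
  hη.2 x t

theorem continuous_orbit (hη : IsNSDFlow f η) (x : X) : Continuous fun t => η t x :=
  continuous_iff_continuousAt.2 fun t => (hη.hasDerivAt x t).continuousAt

theorem dist_le (hη : IsNSDFlow f η) (x : X) (s t : ℝ) : dist (η s x) (η t x) ≤ dist s t := by
  simpa only [dist_eq_norm, one_mul] using
    convex_univ.norm_image_sub_le_of_norm_hasDerivWithin_le
      (fun u _ => (hη.hasDerivAt x u).hasDerivWithinAt)
      (fun u _ => norm_nsdField_le_one f (η u x)) (mem_univ t) (mem_univ s)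

theorem hasDerivAt_comp (hf : ContDiff ℝ 2 f) (hη : IsNSDFlow f η) (x : X) (t : ℝ) :
    HasDerivAt (fun s => f (η s x))
      (-((1 + ‖gradient f (η t x)‖)⁻¹ * ‖gradient f (η t x)‖ ^ 2)) t := by
  have hgrad : HasFDerivAt f (InnerProductSpace.toDual ℝ X (gradient f (η t x))) (η t x) :=
    ((hf.differentiable (by norm_num)).differentiableAt).hasGradientAt.hasFDerivAt
  have hcomp := hgrad.comp_hasDerivAt t (hη.hasDerivAt x t)
  rwa [InnerProductSpace.toDual_apply_apply, nsdField, inner_neg_right, real_inner_smul_right,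
    real_inner_self_eq_norm_sq] at hcomp

theorem antitone_comp (hf : ContDiff ℝ 2 f) (hη : IsNSDFlow f η) (x : X) :
    Antitone fun t => f (η t x) :=
  antitone_of_deriv_nonpos (fun t => (hη.hasDerivAt_comp hf x t).differentiableAt) fun t => by
    rw [(hη.hasDerivAt_comp hf x t).deriv, neg_nonpos]
    positivity

theorem gradient_eq_zero_of_hasDerivAt_comp (hf : ContDiff ℝ 2 f) (hη : IsNSDFlow f η)
    {x : X} {t : ℝ} (h : HasDerivAt (fun s => f (η s x)) 0 t) : gradient f (η t x) = 0 := by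
  have h0 := (hη.hasDerivAt_comp hf x t).unique h
  rwa [neg_eq_zero, mul_eq_zero, inv_eq_zero, or_iff_right (by positivity), sq_eq_zero_iff,
    norm_eq_zero] at h0

theorem eq_of_gradient_eq_zero (hf : ContDiff ℝ 2 f) (hη : IsNSDFlow f η) {x : X} {u : ℝ}
    (hu : gradient f (η u x) = 0) {t : ℝ} (ht : u ≤ t) : η t x = η u x := by
  have hrest : nsdField f (η u x) = 0 := by simp [nsdField, hu]
  exact (locallyLipschitz_nsdField hf).eq_of_hasDerivAt (hη.hasDerivAt x)
    (fun _ => hrest ▸ hasDerivAt_const _ _) rfl ht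

theorem exists_forall_dist_lt (hf : ContDiff ℝ 2 f) (hη : IsNSDFlow f η) (x : X) (b : ℝ)
    {δ : ℝ} (hδ : 0 < δ) :
    ∃ ρ > 0, ∀ y, dist x y < ρ → ∀ t ∈ Icc 0 b, dist (η t x) (η t y) < δ := by
  obtain ⟨ρ, hρ, hdep⟩ :=
    (locallyLipschitz_nsdField hf).exists_forall_dist_lt_of_hasDerivAt (hη.hasDerivAt x) 0 b hδ
  exact ⟨ρ, hρ, fun y hy => hdep _ (hη.hasDerivAt y) (by rwa [hη.1, hη.1])⟩

theorem continuous (hf : ContDiff ℝ 2 f) (hη : IsNSDFlow f η) {t : ℝ} (ht : 0 ≤ t) :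
    Continuous (η t) :=
  Metric.continuous_iff.2 fun x _ hδ =>
    let ⟨ρ, hρ, hdep⟩ := hη.exists_forall_dist_lt hf x t hδ
    ⟨ρ, hρ, fun y hy => dist_comm (η t x) _ ▸ hdep y (dist_comm x y ▸ hy) t ⟨ht, le_rfl⟩⟩

theorem mem_connectedComponentIn (hf : ContDiff ℝ 2 f) (hη : IsNSDFlow f η) {c : ℝ} {p x : X}
    (hx : x ∈ connectedComponentIn {y | f y < c} p) {t : ℝ} (ht : 0 ≤ t) :
    η t x ∈ connectedComponentIn {y | f y < c} p := by
  have hx₀ : f (η 0 x) < c := by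
    rw [hη.1]
    exact connectedComponentIn_subset {y | f y < c} p hx
  have h := mem_connectedComponentIn_of_antitone_comp (hη.continuous_orbit x)
    (hη.antitone_comp hf x) hx₀ ht
  rwa [hη.1, ← connectedComponentIn_eq hx] at h

theorem setOf_mem_connectedComponentIn_eq (hf : ContDiff ℝ 2 f) (hη : IsNSDFlow f η)
    {x p : X} (hp : p ∈ omegaLim η x) {L : ℝ} (hpL : f p < L) :
    {t | 0 ≤ t ∧ η t x ∈ connectedComponentIn {y | f y < L} p} =
      {t | 0 ≤ t ∧ f (η t x) < L} :=
  ext fun _ => and_congr_right fun _ => ⟨fun h => connectedComponentIn_subset {y | f y < L} p h,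
    mem_connectedComponentIn_of_mem_omegaLim hf.continuous (hη.continuous_orbit x)
      (hη.antitone_comp hf x) hp hpL⟩

theorem lt_comp_of_lt_sInf (hf : ContDiff ℝ 2 f) (hη : IsNSDFlow f η) {x p : X}
    (hp : p ∈ omegaLim η x) {L : ℝ} (hpL : f p < L) {t : ℝ} (ht0 : 0 ≤ t)
    (ht : t < sInf {s | 0 ≤ s ∧ f (η s x) < L}) : L < f (η t x) := by
  set τ := sInf {s | 0 ≤ s ∧ f (η s x) < L}
  have hbdd : BddBelow {s | 0 ≤ s ∧ f (η s x) < L} := ⟨0, fun _ h => h.1⟩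
  have hge : ∀ s, 0 ≤ s → s < τ → L ≤ f (η s x) := fun s hs hsτ =>
    not_lt.1 fun hlt => not_lt.2 (csInf_le hbdd ⟨hs, hlt⟩) hsτ
  refine (hge t ht0 ht).lt_of_ne fun hL => ?_
  -- `f ∘ η` is constant on `(t, τ)`, so the trajectory reaches a critical point, which it
  -- never leaves and which therefore is `p`, where `f < L`.
  have hconst : ∀ s ∈ Ioo t τ, f (η s x) = L := fun s hs =>
    le_antisymm (hL ▸ hη.antitone_comp hf x hs.1.le) (hge s (ht0.trans hs.1.le) hs.2)
  obtain ⟨u, htu, huτ⟩ := exists_between ht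
  have hderiv : HasDerivAt (fun s => f (η s x)) 0 u :=
    (hasDerivAt_const u L).congr_of_eventuallyEq (eventually_of_mem (Ioo_mem_nhds htu huτ) hconst)
  have hcrit := hη.gradient_eq_zero_of_hasDerivAt_comp hf hderiv
  have hup : η u x = p :=
    eq_of_mem_omegaLim_of_forall_ge hp fun _ hs => hη.eq_of_gradient_eq_zero hf hcrit hs
  exact hpL.ne (hup ▸ hconst u ⟨htu, huτ⟩)

theorem exists_dist_descendingPath_lt (hf : ContDiff ℝ 2 f) (hη : IsNSDFlow f η) {T : X → ℝ}
    {Z : Set X} (hT : ContinuousOn T Z) (hT0 : ∀ x ∈ Z, 0 ≤ T x) (p : X) {x₁ : X} (hx₁ : x₁ ∈ Z)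
    {δ : ℝ} (hδ : 0 < δ) :
    ∃ ρ > 0, ∀ x₂ ∈ Z, dist x₁ x₂ < ρ → ∀ s ∈ Icc (0 : ℝ) 1,
      dist (descendingPath (fun t => η t x₁) (T x₁) p s)
        (descendingPath (fun t => η t x₂) (T x₂) p s) < δ := by
  obtain ⟨ρT, hρT, hTc⟩ := Metric.continuousOn_iff.1 hT x₁ hx₁ (min 1 (δ / 4)) (by positivity)
  obtain ⟨ρη, hρη, hdep⟩ := hη.exists_forall_dist_lt hf x₁ (T x₁ + 1) (by positivity : 0 < δ / 4)
  refine ⟨min ρT ρη, lt_min hρT hρη, fun x₂ hx₂ h12 s hs =>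
    (dist_descendingPath_le (fun u hu => ?_) hs).trans_lt (half_lt_self hδ)⟩
  have hT12 : |T x₂ - T x₁| < min 1 (δ / 4) := by
    rw [← Real.dist_eq]
    exact hTc x₂ hx₂ (dist_comm x₁ x₂ ▸ h12.trans_le (min_le_left _ _))
  obtain ⟨hT12₁, hT12₂⟩ := lt_min_iff.1 hT12
  have htime : dist (T x₁ * u) (T x₂ * u) ≤ δ / 4 := by
    rw [Real.dist_eq, ← sub_mul, abs_mul, abs_of_nonneg hu.1, abs_sub_comm]
    exact (mul_le_of_le_one_right (abs_nonneg _) hu.2).trans hT12₂.le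
  have hu₂ : T x₂ * u ∈ Icc 0 (T x₁ + 1) :=
    ⟨mul_nonneg (hT0 x₂ hx₂) hu.1, (mul_le_of_le_one_right (hT0 x₂ hx₂) hu.2).trans
      (by linarith [(abs_lt.1 hT12₁).2])⟩
  calc dist (η (T x₁ * u) x₁) (η (T x₂ * u) x₂)
      ≤ dist (η (T x₁ * u) x₁) (η (T x₂ * u) x₁) + dist (η (T x₂ * u) x₁) (η (T x₂ * u) x₂) :=
        dist_triangle _ _ _
    _ ≤ δ / 4 + δ / 4 := add_le_add ((hη.dist_le _ _ _).trans htime)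
        (hdep x₂ (h12.trans_le (min_le_right _ _)) _ hu₂).le
    _ = δ / 2 := by ring

end IsNSDFlow

theorem stmt16_general (f : X → ℝ) (hf : ContDiff ℝ 2 f) (η : ℝ → X → X)
    (hη : IsNSDFlow f η)
    (c : ℝ) (xbar : X)
    (S : Set X) (hS : S = connectedComponentIn {x : X | f x < c} xbar)
    (ε : ℝ) (hε : 0 < ε)
    (F : Set X) (hF : F = connectedComponentIn {x : X | f x < f xbar + ε} xbar)
    (r : ℝ) (hr : 0 < r) (hFr : F ⊆ ball xbar r)
    (hcontr : ∀ x ∈ ball xbar r, ∀ l ∈ Icc (0:ℝ) 1, (1 - l) • x + l • xbar ∈ S)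
    (T : X → ℝ) (hT : ∀ x₁ : X, T x₁ = sInf {t : ℝ | 0 ≤ t ∧ η t x₁ ∈ F})
    (α : X → ℝ → X)
    (hα : ∀ (x₁ : X) (s : ℝ), α x₁ s =
      if s ≤ 1/2 then η (T x₁ * (2 * s)) x₁
      else (1 - (2 * s - 1)) • η (T x₁) x₁ + (2 * s - 1) • xbar) :
    (∀ x₁ ∈ S, omegaLim η x₁ = {xbar} →
      ContinuousOn (α x₁) (Icc 0 1) ∧ α x₁ 0 = x₁ ∧ α x₁ 1 = xbar ∧
      ∀ s ∈ Icc (0:ℝ) 1, α x₁ s ∈ S) ∧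
    ContinuousOn T {x : X | omegaLim η x = {xbar}} ∧
    ∀ x₁ : X, omegaLim η x₁ = {xbar} → ∀ δ > 0, ∃ ρ > 0,
      ∀ x₂ : X, omegaLim η x₂ = {xbar} → dist x₁ x₂ < ρ →
        ∀ s ∈ Icc (0:ℝ) 1, dist (α x₁ s) (α x₂ s) < δ := by
  have hα' : ∀ x, α x = descendingPath (fun t => η t x) (T x) xbar := fun x => funext (hα x)
  have hxbar : ∀ x, omegaLim η x = {xbar} → xbar ∈ omegaLim η x := fun x hx => hx ▸ rfl
  have hL : f xbar < f xbar + ε := lt_add_of_pos_right _ hε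
  have hTeq : ∀ x, xbar ∈ omegaLim η x → T x = sInf {t | 0 ≤ t ∧ f (η t x) < f xbar + ε} :=
    fun x hx => by rw [hT x, hF, hη.setOf_mem_connectedComponentIn_eq hf hx hL]
  have hne : ∀ x, xbar ∈ omegaLim η x → ∃ t ≥ 0, f (η t x) < f xbar + ε := fun x hx =>
    exists_ge_mem_of_mem_omegaLim hx ((isOpen_lt hf.continuous continuous_const).mem_nhds hL) 0
  have hT0 : ∀ x, 0 ≤ T x := fun x => hT x ▸ Real.sInf_nonneg fun _ ht => ht.1
  have hTcont : ContinuousOn T {x | omegaLim η x = {xbar}} :=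
    (continuousOn_sInf_setOf_lt (fun t ht => hf.continuous.comp (hη.continuous hf ht))
      (fun x _ => hη.antitone_comp hf x) (fun x hx => hne x (hxbar x hx))
      (fun x hx _ => hη.lt_comp_of_lt_sInf hf (hxbar x hx) hL)).congr
      fun x hx => hTeq x (hxbar x hx)
  refine ⟨fun x₁ hx₁S hω => ?_, hTcont, fun x₁ hω₁ δ hδ => ?_⟩
  · have hTF : η (T x₁) x₁ ∈ closure F := by
      refine hT x₁ ▸ map_sInf_mem_closure (hη.continuous_orbit x₁) ?_
      rw [hF, hη.setOf_mem_connectedComponentIn_eq hf (hxbar x₁ hω) hL]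
      exact hne x₁ (hxbar x₁ hω)
    rw [hα']
    refine ⟨(continuous_descendingPath (hη.continuous_orbit x₁)).continuousOn,
      descendingPath_zero.trans (hη.1 x₁), descendingPath_one, fun s hs => descendingPath_mem
        (fun u hu => hS ▸ hη.mem_connectedComponentIn hf (hS ▸ hx₁S) (mul_nonneg (hT0 x₁) hu.1))
        (fun l hl => ?_) hs⟩
    have hball := (convex_ball xbar r).combo_closure_interior_mem_interior (closure_mono hFr hTF)
      (mem_interior_iff_mem_nhds.2 (ball_mem_nhds xbar hr)) (sub_nonneg.2 hl.2) hl.1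
      (sub_add_cancel 1 l)
    simpa using hcontr _ (interior_subset hball) 0 ⟨le_rfl, zero_le_one⟩
  · simp only [hα']
    exact hη.exists_dist_descendingPath_lt hf hTcont (fun x _ => hT0 x) xbar hω₁ hδ

theorem stmt16 (f : X → ℝ) (hf : ContDiff ℝ 2 f) (η : ℝ → X → X)
    (hη : IsNSDFlow f η)
    (c : ℝ) (xbar : X) (hxbarc : f xbar < c) (hmin : StrictLocalMin f xbar)
    (S : Set X) (hS : S = connectedComponentIn {x : X | f x < c} xbar)
    (ε : ℝ) (hε : 0 < ε)
    (F : Set X) (hF : F = connectedComponentIn {x : X | f x < f xbar + ε} xbar)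
    (r : ℝ) (hr : 0 < r) (hFr : F ⊆ ball xbar r)
    (hcontr : ∀ x ∈ ball xbar r, ∀ l ∈ Icc (0:ℝ) 1, (1 - l) • x + l • xbar ∈ S)
    (T : X → ℝ) (hT : ∀ x₁ : X, T x₁ = sInf {t : ℝ | 0 ≤ t ∧ η t x₁ ∈ F})
    (α : X → ℝ → X)
    (hα : ∀ (x₁ : X) (s : ℝ), α x₁ s =
      if s ≤ 1/2 then η (T x₁ * (2 * s)) x₁
      else (1 - (2 * s - 1)) • η (T x₁) x₁ + (2 * s - 1) • xbar) :
    (∀ x₁ ∈ S, omegaLim η x₁ = {xbar} →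
      ContinuousOn (α x₁) (Icc 0 1) ∧ α x₁ 0 = x₁ ∧ α x₁ 1 = xbar ∧
      ∀ s ∈ Icc (0:ℝ) 1, α x₁ s ∈ S) ∧
    ContinuousOn T {x : X | omegaLim η x = {xbar}} ∧
    ∀ x₁ : X, omegaLim η x₁ = {xbar} → ∀ δ > 0, ∃ ρ > 0,
      ∀ x₂ : X, omegaLim η x₂ = {xbar} → dist x₁ x₂ < ρ →
        ∀ s ∈ Icc (0:ℝ) 1, dist (α x₁ s) (α x₂ s) < δ :=
  stmt16_general f hf η hη c xbar S hS ε hε F hF r hr hFr hcontr T hT α hα
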